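/- arXiv:1708.09743 — 5 statements merged into one kernel-verified Lean document; each statement's English description precedes it below -/
import Mathlib

section
/- Let S⁺ and S⁻ be subsets of ℝ^{n+1} where every vector in S⁺ has first coordinate 1 and every vector in S⁻ has first coordinate −1. Then 0 ∈ conv(S⁺ ∪ S⁻) if and only if conv(S⁺) ∩ conv(−S⁻) ≠ ∅. -/
/-!
The first coordinate is a linear functional `f` equal to `1` on `S⁺` and to `-1` on `S⁻`,
hence on their convex hulls. If `0 = a • x + b • y` with `x ∈ conv S⁺`, `y ∈ conv S⁻` and
`a + b = 1`, applying `f` gives `a = b`, so `x = -y ∈ conv (-S⁻)`. Conversely, if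
`x ∈ conv S⁺` and `-x ∈ conv S⁻`, then `0` is the midpoint of `x` and `-x`.
-/

open Set

variable {𝕜 E : Type*} [Field 𝕜] [LinearOrder 𝕜] [IsStrictOrderedRing 𝕜]
  [AddCommGroup E] [Module 𝕜 E]

theorem convexHull_subset_setOf_eq {f : E →ₗ[𝕜] 𝕜} {s : Set E} {c : 𝕜}
    (hs : ∀ v ∈ s, f v = c) : convexHull 𝕜 s ⊆ {v | f v = c} :=
  convexHull_min hs (convex_hyperplane f.isLinear c)

theorem zero_mem_convexHull_union_of_inter_neg_nonempty {s t : Set E}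
    (h : (convexHull 𝕜 s ∩ convexHull 𝕜 (-t)).Nonempty) : (0 : E) ∈ convexHull 𝕜 (s ∪ t) := by
  obtain ⟨x, hxs, hxt⟩ := h
  rw [convexHull_neg, mem_neg] at hxt
  rw [← midpoint_self_neg 𝕜 x]
  exact (convex_convexHull 𝕜 _).midpoint_mem (convexHull_mono subset_union_left hxs)
    (convexHull_mono subset_union_right hxt)

theorem inter_neg_nonempty_of_zero_mem_convexHull_union (f : E →ₗ[𝕜] 𝕜) {s t : Set E}
    (hs : ∀ v ∈ s, f v = 1) (ht : ∀ v ∈ t, f v = -1) (h0 : (0 : E) ∈ convexHull 𝕜 (s ∪ t)) :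
    (convexHull 𝕜 s ∩ convexHull 𝕜 (-t)).Nonempty := by
  obtain rfl | hs_ne := s.eq_empty_or_nonempty
  · rw [empty_union] at h0
    simpa using convexHull_subset_setOf_eq ht h0
  obtain rfl | ht_ne := t.eq_empty_or_nonempty
  · rw [union_empty] at h0
    simpa using convexHull_subset_setOf_eq hs h0
  rw [convexHull_union hs_ne ht_ne, mem_convexJoin] at h0
  obtain ⟨x, hx, y, hy, a, b, -, -, hab, hxy⟩ := h0
  have hfx : f x = 1 := convexHull_subset_setOf_eq hs hx
  have hfy : f y = -1 := convexHull_subset_setOf_eq ht hy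
  have hba : b = a := by
    have := congrArg f hxy
    simp only [map_add, map_smul, hfx, hfy, smul_eq_mul, map_zero] at this
    linarith
  have ha : a ≠ 0 := by
    rintro rfl
    simp [hba] at hab
  have hx_neg : x = -y := by
    rw [hba, ← smul_add, smul_eq_zero_iff_right ha] at hxy
    exact eq_neg_of_add_eq_zero_left hxy
  refine ⟨x, hx, ?_⟩
  rwa [convexHull_neg, mem_neg, hx_neg, neg_neg]

theorem zero_mem_convexHull_union_iff (f : E →ₗ[𝕜] 𝕜) {s t : Set E}
    (hs : ∀ v ∈ s, f v = 1) (ht : ∀ v ∈ t, f v = -1) :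
    (0 : E) ∈ convexHull 𝕜 (s ∪ t) ↔ (convexHull 𝕜 s ∩ convexHull 𝕜 (-t)).Nonempty :=
  ⟨inter_neg_nonempty_of_zero_mem_convexHull_union f hs ht,
    zero_mem_convexHull_union_of_inter_neg_nonempty⟩

theorem stmt_2 (n : ℕ) (Sp Sm : Set (Fin (n + 1) → ℝ))
    (h1 : ∀ v ∈ Sp, v 0 = 1) (h2 : ∀ v ∈ Sm, v 0 = -1) :
    (0 : Fin (n + 1) → ℝ) ∈ convexHull ℝ (Sp ∪ Sm) ↔
      (convexHull ℝ Sp ∩ convexHull ℝ (-Sm)).Nonempty :=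
  zero_mem_convexHull_union_iff (LinearMap.proj 0) h1 h2
end

section
/- Let Q be a nonempty finite subset of ℝ^d, f : Q → ℝ, and g_1,…,g_n : Q → ℝ. Suppose A* = (a_0*,…,a_n*) ∈ ℝ^{n+1}. Define E⁺ = {x ∈ Q : L(A*,x) − f(x) = max_{y∈Q}|f(y) − L(A*,y)|} and E⁻ = {x ∈ Q : f(x) − L(A*,x) = max_{y∈Q}|f(y) − L(A*,y)|}, where L(A,x) = a_0 + ∑ a_i g_i(x). If the convex hulls of G⁺ = {(1,g_1(x),…,g_n(x)) : x ∈ E⁺} and G⁻ = {(1,g_1(x),…,g_n(x)) : x ∈ E⁻} intersect, then A* minimises A ↦ max_{x∈Q} |f(x) − L(A,x)| over ℝ^{n+1}. -/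
/-! If some `A` did strictly better than `A*`, then `L(A, x) - L(A*, x) < 0` on `E⁺` and `> 0` on
`E⁻`. This difference is the linear functional `v ↦ (A - A*) ⬝ᵥ v` evaluated at
`(1, g₁(x), …, gₙ(x))`, so it separates `G⁺` from `G⁻`, and hence also their convex hulls. -/

theorem disjoint_convexHull_of_lt_of_lt {𝕜 E β : Type*} [Semiring 𝕜] [PartialOrder 𝕜]
    [AddCommMonoid E] [Module 𝕜 E] [AddCommMonoid β] [PartialOrder β]
    [IsOrderedCancelAddMonoid β] [Module 𝕜 β] [PosSMulStrictMono 𝕜 β]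
    {s t : Set E} (φ : E →ₗ[𝕜] β) (r : β) (hs : ∀ x ∈ s, φ x < r) (ht : ∀ x ∈ t, r < φ x) :
    Disjoint (convexHull 𝕜 s) (convexHull 𝕜 t) :=
  Set.disjoint_left.2 fun _ hus hut =>
    lt_asymm (convexHull_min hs (convex_halfSpace_lt φ.isLinear r) hus)
      (convexHull_min ht (convex_halfSpace_gt φ.isLinear r) hut)

theorem dotProduct_cons_one {R : Type*} [CommSemiring R] {n : ℕ} (A : Fin (n + 1) → R)
    (v : Fin n → R) : A ⬝ᵥ Fin.cons 1 v = A 0 + ∑ i, A i.succ * v i := by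
  simp [dotProduct, Fin.sum_univ_succ]

theorem stmt_4 (d n : ℕ) (Q : Finset (Fin d → ℝ)) (hQ : Q.Nonempty)
    (f : (Fin d → ℝ) → ℝ) (g : Fin n → (Fin d → ℝ) → ℝ)
    (L : (Fin (n + 1) → ℝ) → (Fin d → ℝ) → ℝ)
    (hL : ∀ A x, L A x = A 0 + ∑ i : Fin n, A i.succ * g i x)
    (Astar : Fin (n + 1) → ℝ)
    (M : ℝ) (hM : M = Q.sup' hQ fun x => |f x - L Astar x|)
    (hint : ((convexHull ℝ {v : Fin (n + 1) → ℝ | ∃ x ∈ Q,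
        L Astar x - f x = M ∧ v = Fin.cons 1 fun i => g i x}) ∩
      (convexHull ℝ {v : Fin (n + 1) → ℝ | ∃ x ∈ Q,
        f x - L Astar x = M ∧ v = Fin.cons 1 fun i => g i x})).Nonempty) :
    ∀ A : Fin (n + 1) → ℝ,
      Q.sup' hQ (fun x => |f x - L Astar x|) ≤ Q.sup' hQ fun x => |f x - L A x| := by
  intro A
  rw [← hM]
  by_contra! hlt
  have hbetter : ∀ x ∈ Q, |f x - L A x| < M := (Finset.sup'_lt_iff hQ).1 hlt
  let φ := dotProductBilin ℝ ℝ (A - Astar)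
  have hφ (x : Fin d → ℝ) : φ (Fin.cons 1 fun i => g i x) = L A x - L Astar x := by
    simp only [φ, dotProductBilin_apply_apply, sub_dotProduct, dotProduct_cons_one, hL]
  refine Set.not_disjoint_iff_nonempty_inter.2 hint (disjoint_convexHull_of_lt_of_lt φ 0 ?_ ?_)
  · rintro _ ⟨x, hx, hxM, rfl⟩
    linarith [hφ x, (abs_lt.1 (hbetter x hx)).1]
  · rintro _ ⟨x, hx, hxM, rfl⟩
    linarith [hφ x, (abs_lt.1 (hbetter x hx)).2]
end

section
/- Let Q be a nonempty finite subset of ℝ^d, f : Q → ℝ, g_1,…,g_n : Q → ℝ, and L(A,x) = a_0 + ∑_{i=1}^n a_i g_i(x). Suppose A* minimises A ↦ max_{x∈Q}|f(x) − L(A,x)| over ℝ^{n+1} and the minimum value is positive. Then, with E⁺ and E⁻ the sets of maximal positive and negative deviation points, conv{(1,g_1(x),…,g_n(x)) : x ∈ E⁺} ∩ conv{(1,g_1(x),…,g_n(x)) : x ∈ E⁻} ≠ ∅; in particular both E⁺ and E⁻ are nonempty. -/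
/-!
If the two convex hulls were disjoint, a hyperplane would separate them. Every lifted point
`(1, g x)` has first coordinate `1`, so the separating affine functional is a dot product with
some `B`, negative on the lifts of `E⁺` and positive on the lifts of `E⁻`. Moving `A*` a small
step in direction `B` then strictly decreases `|f - L(A, ·)|` at all extremal points while the
other points of the finite grid stay below the maximum, contradicting minimality. Both sets are
nonempty because the hulls meet.
-/

open Filter Topology

theorem eventually_sub_mul_lt {a b M : ℝ} (ha : a ≤ M) (hb : a = M → 0 < b) :
    ∀ᶠ t in 𝓝[>] 0, a - t * b < M := by
  rcases ha.lt_or_eq with ha | rfl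
  · refine Tendsto.eventually_lt_const ha (tendsto_nhdsWithin_of_tendsto_nhds ?_)
    exact (show Continuous fun t : ℝ => a - t * b by fun_prop).tendsto' 0 a (by simp)
  · filter_upwards [eventually_mem_nhdsWithin] with t ht
    exact sub_lt_self _ (mul_pos ht (hb rfl))

theorem eventually_abs_sub_mul_lt {a b M : ℝ} (ha : |a| ≤ M) (hpos : a = M → 0 < b)
    (hneg : a = -M → b < 0) : ∀ᶠ t in 𝓝[>] 0, |a - t * b| < M := by
  rw [abs_le] at ha
  have hlow := eventually_sub_mul_lt (a := -a) (b := -b) (M := M) (by linarith)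
    fun h => neg_pos.2 (hneg (by linarith))
  filter_upwards [eventually_sub_mul_lt ha.2 hpos, hlow] with t hup hlow
  exact abs_lt.2 ⟨by linarith, hup⟩

theorem Finset.exists_pos_forall_abs_sub_mul_lt {ι : Type*} (s : Finset ι) {e h : ι → ℝ} {M : ℝ}
    (hle : ∀ x ∈ s, |e x| ≤ M) (hpos : ∀ x ∈ s, e x = M → 0 < h x)
    (hneg : ∀ x ∈ s, e x = -M → h x < 0) : ∃ t > 0, ∀ x ∈ s, |e x - t * h x| < M :=
  (eventually_mem_nhdsWithin.and <| (eventually_all_finset s).2 fun x hx =>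
    eventually_abs_sub_mul_lt (hle x hx) (hpos x hx) (hneg x hx)).exists

theorem exists_dotProduct_separation_of_disjoint_convexHull {ι : Type*} [Fintype ι]
    [DecidableEq ι] {S T : Set (ι → ℝ)} (hS : S.Finite) (hT : T.Finite)
    (h : Disjoint (convexHull ℝ S) (convexHull ℝ T)) :
    ∃ (B : ι → ℝ) (c : ℝ), (∀ w ∈ S, B ⬝ᵥ w < c) ∧ ∀ w ∈ T, c < B ⬝ᵥ w := by
  obtain ⟨φ, u, u', hu, huu', hu'⟩ := geometric_hahn_banach_compact_closed
    (convex_convexHull ℝ S) (hS.isCompact_convexHull ℝ) (convex_convexHull ℝ T)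
    (hT.isCompact_convexHull ℝ).isClosed h
  have hφ (w : ι → ℝ) : (dotProductEquiv ℝ ι).symm φ.toLinearMap ⬝ᵥ w = φ w :=
    LinearMap.congr_fun ((dotProductEquiv ℝ ι).apply_symm_apply φ.toLinearMap) w
  refine ⟨(dotProductEquiv ℝ ι).symm φ.toLinearMap, u, fun w hw => ?_, fun w hw => ?_⟩ <;>
    rw [hφ]
  · exact hu w (subset_convexHull ℝ S hw)
  · exact huu'.trans (hu' w (subset_convexHull ℝ T hw))

theorem exists_dotProduct_neg_pos_of_disjoint_convexHull {m : ℕ} {S T : Set (Fin (m + 1) → ℝ)}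
    (hS : S.Finite) (hT : T.Finite) (hS₀ : ∀ w ∈ S, w 0 = 1) (hT₀ : ∀ w ∈ T, w 0 = 1)
    (h : Disjoint (convexHull ℝ S) (convexHull ℝ T)) :
    ∃ B : Fin (m + 1) → ℝ, (∀ w ∈ S, B ⬝ᵥ w < 0) ∧ ∀ w ∈ T, 0 < B ⬝ᵥ w := by
  obtain ⟨B, c, hBS, hBT⟩ := exists_dotProduct_separation_of_disjoint_convexHull hS hT h
  have hB (w : Fin (m + 1) → ℝ) (hw : w 0 = 1) : (B - Pi.single 0 c) ⬝ᵥ w = B ⬝ᵥ w - c := by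
    rw [sub_dotProduct, single_dotProduct, hw, mul_one]
  refine ⟨B - Pi.single 0 c, fun w hw => ?_, fun w hw => ?_⟩
  · rw [hB w (hS₀ w hw)]; linarith [hBS w hw]
  · rw [hB w (hT₀ w hw)]; linarith [hBT w hw]

theorem stmt_5_general (d n : ℕ) (Q : Finset (Fin d → ℝ)) (hQ : Q.Nonempty)
    (f : (Fin d → ℝ) → ℝ) (g : Fin n → (Fin d → ℝ) → ℝ)
    (L : (Fin (n + 1) → ℝ) → (Fin d → ℝ) → ℝ)
    (hL : ∀ A x, L A x = A 0 + ∑ i : Fin n, A i.succ * g i x)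
    (Astar : Fin (n + 1) → ℝ)
    (M : ℝ) (hM : M = Q.sup' hQ fun x => |f x - L Astar x|)
    (hmin : ∀ A : Fin (n + 1) → ℝ, M ≤ Q.sup' hQ fun x => |f x - L A x|)
    (Ep Em : Set (Fin d → ℝ))
    (hEp : Ep = {x | x ∈ Q ∧ L Astar x - f x = M})
    (hEm : Em = {x | x ∈ Q ∧ f x - L Astar x = M}) :
    ((convexHull ℝ {v : Fin (n + 1) → ℝ | ∃ x ∈ Ep, v = Fin.cons 1 fun i => g i x}) ∩
      (convexHull ℝ {v : Fin (n + 1) → ℝ | ∃ x ∈ Em,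
        v = Fin.cons 1 fun i => g i x})).Nonempty ∧
    Ep.Nonempty ∧ Em.Nonempty := by
  set v : (Fin d → ℝ) → Fin (n + 1) → ℝ := fun x => Fin.cons 1 fun i => g i x with hv
  have hLv (A : Fin (n + 1) → ℝ) (x : Fin d → ℝ) : L A x = A ⬝ᵥ v x := by
    simp [hL, dotProduct, Fin.sum_univ_succ, hv]
  have himage (E : Set (Fin d → ℝ)) : {w | ∃ x ∈ E, w = Fin.cons 1 fun i => g i x} = v '' E := by
    ext; simp [hv, eq_comm]
  have hfinite (E : Set (Fin d → ℝ)) (hE : E ⊆ Q) : (v '' E).Finite :=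
    (Q.finite_toSet.subset hE).image v
  have hv₀ (E : Set (Fin d → ℝ)) : ∀ w ∈ v '' E, w 0 = 1 := by
    rintro _ ⟨x, -, rfl⟩; rfl
  have hbound (x : Fin d → ℝ) (hx : x ∈ Q) : |f x - L Astar x| ≤ M :=
    hM ▸ Q.le_sup' (fun x => |f x - L Astar x|) hx
  simp only [himage]
  have hhull : (convexHull ℝ (v '' Ep) ∩ convexHull ℝ (v '' Em)).Nonempty := by
    rw [← Set.not_disjoint_iff_nonempty_inter]
    intro hdisj
    obtain ⟨B, hBp, hBm⟩ := exists_dotProduct_neg_pos_of_disjoint_convexHull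
      (hfinite Ep (hEp ▸ fun x hx => hx.1)) (hfinite Em (hEm ▸ fun x hx => hx.1))
      (hv₀ Ep) (hv₀ Em) hdisj
    obtain ⟨t, -, ht⟩ := Q.exists_pos_forall_abs_sub_mul_lt (e := fun x => f x - L Astar x)
      (h := fun x => B ⬝ᵥ v x) hbound
      (fun x hx he => hBm _ ⟨x, hEm ▸ ⟨hx, he⟩, rfl⟩)
      (fun x hx he => hBp _ ⟨x, hEp ▸ ⟨hx, by linarith⟩, rfl⟩)
    refine (hmin (Astar + t • B)).not_gt ((Q.sup'_lt_iff hQ).2 fun x hx => ?_)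
    simpa [hLv, add_dotProduct, smul_dotProduct, sub_add_eq_sub_sub] using ht x hx
  obtain ⟨w, hwp, hwm⟩ := hhull
  exact ⟨⟨w, hwp, hwm⟩, (convexHull_nonempty_iff.1 ⟨w, hwp⟩).of_image,
    (convexHull_nonempty_iff.1 ⟨w, hwm⟩).of_image⟩

theorem stmt_5 (d n : ℕ) (Q : Finset (Fin d → ℝ)) (hQ : Q.Nonempty)
    (f : (Fin d → ℝ) → ℝ) (g : Fin n → (Fin d → ℝ) → ℝ)
    (L : (Fin (n + 1) → ℝ) → (Fin d → ℝ) → ℝ)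
    (hL : ∀ A x, L A x = A 0 + ∑ i : Fin n, A i.succ * g i x)
    (Astar : Fin (n + 1) → ℝ)
    (M : ℝ) (hM : M = Q.sup' hQ fun x => |f x - L Astar x|)
    (hmin : ∀ A : Fin (n + 1) → ℝ, M ≤ Q.sup' hQ fun x => |f x - L A x|)
    (hpos : 0 < M)
    (Ep Em : Set (Fin d → ℝ))
    (hEp : Ep = {x | x ∈ Q ∧ L Astar x - f x = M})
    (hEm : Em = {x | x ∈ Q ∧ f x - L Astar x = M}) :
    ((convexHull ℝ {v : Fin (n + 1) → ℝ | ∃ x ∈ Ep, v = Fin.cons 1 fun i => g i x}) ∩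
      (convexHull ℝ {v : Fin (n + 1) → ℝ | ∃ x ∈ Em,
        v = Fin.cons 1 fun i => g i x})).Nonempty ∧
    Ep.Nonempty ∧ Em.Nonempty :=
  stmt_5_general d n Q hQ f g L hL Astar M hM hmin Ep Em hEp hEm
end

section
/- Let E⁺, E⁻ be finite subsets of ℝ^d, m ≥ 1, and suppose there are α_x ≥ 0, not all zero on each side, with ∑_{E⁺} α_x = ∑_{E⁻} α_x = 1 and ∑_{x∈E⁺} α_x x^e = ∑_{x∈E⁻} α_x x^e for all |e| ≤ m. Let u ∈ ℝ^d, a ∈ ℝ, σ(x) = ⟨u,x⟩ − a, and define Ẽ⁺ = {x ∈ E⁺ : σ(x) > 0} ∪ {x ∈ E⁻ : σ(x) < 0} and Ẽ⁻ = {x ∈ E⁻ : σ(x) > 0} ∪ {x ∈ E⁺ : σ(x) < 0}. If A⁺ = ∑_{x∈Ẽ⁺} α_x|σ(x)| > 0 and A⁻ = ∑_{x∈Ẽ⁻} α_x|σ(x)| > 0, then setting α̂_x = α_x|σ(x)|/A⁺ for x ∈ Ẽ⁺ and α̂_x = α_x|σ(x)|/A⁻ for x ∈ Ẽ⁻, one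 has ∑_{x∈Ẽ⁺} α̂_x = ∑_{x∈Ẽ⁻} α̂_x = 1 and ∑_{x∈Ẽ⁺} α̂_x x^e = ∑_{x∈Ẽ⁻} α̂_x x^e for all |e| ≤ m−1, provided A⁺ = A⁻. -/
/-!
Since `σ · x^e` is a combination of monomials of degree at most `|e| + 1`, the moment identity up
to degree `m` gives `∑_{E⁺} α σ x^e = ∑_{E⁻} α σ x^e` for `|e| ≤ m - 1`. Splitting each side by the
sign of `σ` and moving the negative parts across turns this into
`∑_{Ẽ⁺} α |σ| x^e = ∑_{Ẽ⁻} α |σ| x^e`; dividing by `A⁺ = A⁻` normalises the new weights.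
-/

namespace Finset

section Moments

variable {ι R : Type*} [Fintype ι] [DecidableEq ι] [CommRing R]

theorem prod_pow_add_single (x : ι → R) (e : ι → ℕ) (i : ι) :
    ∏ j, x j ^ (e + Pi.single i 1 : ι → ℕ) j = x i * ∏ j, x j ^ e j := by
  simp only [Pi.add_apply, pow_add, prod_mul_distrib, Pi.single_apply, pow_ite, pow_one, pow_zero,
    prod_ite_eq', mem_univ, if_true, mul_comm]

theorem sum_add_single (e : ι → ℕ) (i : ι) :
    ∑ j, (e + Pi.single i 1 : ι → ℕ) j = ∑ j, e j + 1 := by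
  simp [sum_add_distrib]

theorem affine_mul_prod_pow (u x : ι → R) (a : R) (e : ι → ℕ) :
    (∑ i, u i * x i - a) * ∏ j, x j ^ e j =
      ∑ i, u i * ∏ j, x j ^ (e + Pi.single i 1 : ι → ℕ) j - a * ∏ j, x j ^ e j := by
  simp only [prod_pow_add_single, sub_mul, sum_mul, mul_assoc]

theorem sum_mul_affine_mul_prod_pow (s : Finset (ι → R)) (w : (ι → R) → R) (u : ι → R) (a : R)
    (e : ι → ℕ) :
    ∑ x ∈ s, w x * (∑ i, u i * x i - a) * ∏ j, x j ^ e j =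
      ∑ i, u i * ∑ x ∈ s, w x * ∏ j, x j ^ (e + Pi.single i 1 : ι → ℕ) j -
        a * ∑ x ∈ s, w x * ∏ j, x j ^ e j := by
  simp only [mul_assoc, affine_mul_prod_pow]
  simp only [mul_sub, mul_sum, sum_sub_distrib]
  rw [sum_comm]
  simp only [mul_left_comm]

theorem sum_mul_affine_mul_prod_pow_eq_of_moments {m : ℕ} {P M : Finset (ι → R)}
    {w : (ι → R) → R}
    (hmom : ∀ e : ι → ℕ, ∑ i, e i ≤ m →
      ∑ x ∈ P, w x * ∏ i, x i ^ e i = ∑ x ∈ M, w x * ∏ i, x i ^ e i)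
    (u : ι → R) (a : R) {e : ι → ℕ} (he : ∑ i, e i + 1 ≤ m) :
    ∑ x ∈ P, w x * (∑ i, u i * x i - a) * ∏ j, x j ^ e j =
      ∑ x ∈ M, w x * (∑ i, u i * x i - a) * ∏ j, x j ^ e j := by
  have hshift (i : ι) := hmom (e + Pi.single i 1) ((sum_add_single e i).trans_le he)
  simp only [sum_mul_affine_mul_prod_pow, hshift, hmom e (by omega)]

end Moments

theorem disjoint_filter_pos_filter_neg {ι R : Type*} [Zero R] [LinearOrder R]
    (s t : Finset ι) (σ : ι → R) :
    Disjoint (s.filter (0 < σ ·)) (t.filter (σ · < 0)) :=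
  disjoint_left.2 fun _ hs ht => (mem_filter.1 hs).2.not_gt (mem_filter.1 ht).2

section SignSplit

variable {ι R : Type*} [Ring R] [LinearOrder R] [IsOrderedRing R]

theorem sum_mul_eq_sum_filter_pos_sub_sum_filter_neg (s : Finset ι) (w σ g : ι → R) :
    ∑ x ∈ s, w x * σ x * g x =
      ∑ x ∈ s.filter (0 < σ ·), w x * |σ x| * g x -
        ∑ x ∈ s.filter (σ · < 0), w x * |σ x| * g x := by
  rw [sum_filter, sum_filter, ← sum_sub_distrib]
  refine sum_congr rfl fun x _ => ?_
  rcases lt_trichotomy (σ x) 0 with h | h | h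
  · simp [h, h.not_gt, abs_of_neg h]
  · simp [h]
  · simp [h, h.not_gt, abs_of_pos h]

theorem sum_filter_union_abs_eq [DecidableEq ι] {P M : Finset ι} {w σ g : ι → R}
    (h : ∑ x ∈ P, w x * σ x * g x = ∑ x ∈ M, w x * σ x * g x) :
    ∑ x ∈ P.filter (0 < σ ·) ∪ M.filter (σ · < 0), w x * |σ x| * g x =
      ∑ x ∈ M.filter (0 < σ ·) ∪ P.filter (σ · < 0), w x * |σ x| * g x := by
  rw [sum_mul_eq_sum_filter_pos_sub_sum_filter_neg P,
    sum_mul_eq_sum_filter_pos_sub_sum_filter_neg M, sub_eq_sub_iff_add_eq_add] at h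
  rwa [sum_union (disjoint_filter_pos_filter_neg _ _ _),
    sum_union (disjoint_filter_pos_filter_neg _ _ _)]

end SignSplit

end Finset

open Finset

open scoped Classical in
theorem stmt_10_general (d m : ℕ) (hm : 1 ≤ m) (Ep Em : Finset (Fin d → ℝ))
    (α : (Fin d → ℝ) → ℝ)
    (hmom : ∀ e : Fin d → ℕ, ∑ i, e i ≤ m →
      ∑ x ∈ Ep, α x * ∏ i, x i ^ e i = ∑ x ∈ Em, α x * ∏ i, x i ^ e i)
    (u : Fin d → ℝ) (a : ℝ) (σ : (Fin d → ℝ) → ℝ)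
    (hσ : ∀ x, σ x = (∑ i, u i * x i) - a)
    (Etp Etm : Finset (Fin d → ℝ))
    (hEtp : Etp = Ep.filter (fun x => 0 < σ x) ∪ Em.filter (fun x => σ x < 0))
    (hEtm : Etm = Em.filter (fun x => 0 < σ x) ∪ Ep.filter (fun x => σ x < 0))
    (Ap Am : ℝ)
    (hAp : Ap = ∑ x ∈ Etp, α x * |σ x|) (hAm : Am = ∑ x ∈ Etm, α x * |σ x|)
    (hApos : 0 < Ap) (hAmpos : 0 < Am) (hAeq : Ap = Am) :
    (∑ x ∈ Etp, α x * |σ x| / Ap = 1) ∧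
    (∑ x ∈ Etm, α x * |σ x| / Am = 1) ∧
    ∀ e : Fin d → ℕ, ∑ i, e i ≤ m - 1 →
      ∑ x ∈ Etp, (α x * |σ x| / Ap) * ∏ i, x i ^ e i =
        ∑ x ∈ Etm, (α x * |σ x| / Am) * ∏ i, x i ^ e i := by
  have hσmom (e : Fin d → ℕ) (he : ∑ i, e i ≤ m - 1) :
      ∑ x ∈ Ep, α x * σ x * ∏ i, x i ^ e i = ∑ x ∈ Em, α x * σ x * ∏ i, x i ^ e i := by
    simp only [hσ]
    exact sum_mul_affine_mul_prod_pow_eq_of_moments hmom u a (by omega)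
  refine ⟨by rw [← sum_div, ← hAp, div_self hApos.ne'],
    by rw [← sum_div, ← hAm, div_self hAmpos.ne'], fun e he => ?_⟩
  simp only [div_mul_eq_mul_div, ← sum_div, hEtp, hEtm, hAeq]
  rw [sum_filter_union_abs_eq (hσmom e he)]

open scoped Classical in
theorem stmt_10 (d m : ℕ) (hm : 1 ≤ m) (Ep Em : Finset (Fin d → ℝ))
    (α : (Fin d → ℝ) → ℝ) (hα : ∀ x ∈ Ep ∪ Em, 0 ≤ α x)
    (hnzp : ∃ x ∈ Ep, α x ≠ 0) (hnzm : ∃ x ∈ Em, α x ≠ 0)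
    (hαp : ∑ x ∈ Ep, α x = 1) (hαm : ∑ x ∈ Em, α x = 1)
    (hmom : ∀ e : Fin d → ℕ, ∑ i, e i ≤ m →
      ∑ x ∈ Ep, α x * ∏ i, x i ^ e i = ∑ x ∈ Em, α x * ∏ i, x i ^ e i)
    (u : Fin d → ℝ) (a : ℝ) (σ : (Fin d → ℝ) → ℝ)
    (hσ : ∀ x, σ x = (∑ i, u i * x i) - a)
    (Etp Etm : Finset (Fin d → ℝ))
    (hEtp : Etp = Ep.filter (fun x => 0 < σ x) ∪ Em.filter (fun x => σ x < 0))
    (hEtm : Etm = Em.filter (fun x => 0 < σ x) ∪ Ep.filter (fun x => σ x < 0))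
    (Ap Am : ℝ)
    (hAp : Ap = ∑ x ∈ Etp, α x * |σ x|) (hAm : Am = ∑ x ∈ Etm, α x * |σ x|)
    (hApos : 0 < Ap) (hAmpos : 0 < Am) (hAeq : Ap = Am) :
    (∑ x ∈ Etp, α x * |σ x| / Ap = 1) ∧
    (∑ x ∈ Etm, α x * |σ x| / Am = 1) ∧
    ∀ e : Fin d → ℕ, ∑ i, e i ≤ m - 1 →
      ∑ x ∈ Etp, (α x * |σ x| / Ap) * ∏ i, x i ^ e i =
        ∑ x ∈ Etm, (α x * |σ x| / Am) * ∏ i, x i ^ e i :=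
  stmt_10_general d m hm Ep Em α hmom u a σ hσ Etp Etm hEtp hEtm Ap Am hAp hAm hApos hAmpos hAeq
end

section
/- Let x_1 < x_2 < ⋯ < x_{m+2} be real numbers and define signs s_i = (−1)^i. Then there exist positive coefficients α_1,…,α_{m+2} such that ∑_{i : s_i = 1} α_i = ∑_{i : s_i = −1} α_i = 1 and for every exponent 0 ≤ e ≤ m, ∑_{i : s_i = 1} α_i x_i^e = ∑_{i : s_i = −1} α_i x_i^e. -/
/-!
The weights `w i = ∏_{j ≠ i} (x i - x j)⁻¹` satisfy `∑ i, w i * p (x i) = 0` for every polynomial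
`p` of degree at most `m`: the sum is the coefficient of `X ^ (m + 1)` in the Lagrange interpolant of
`p` on the `m + 2` nodes, which is `p` itself. For increasing nodes `w i` has sign `(-1) ^ (m + 1 - i)`,
so `(-1) ^ i * |w i|` is a constant multiple of `w i`, and the normalised `|w i|` are the coefficients.
-/

open Finset Polynomial

theorem Finset.sum_neg_one_pow_mul_eq_sub {ι R : Type*} [CommRing R] (s : Finset ι) (g : ι → ℕ)
    (f : ι → R) :
    ∑ i ∈ s, (-1) ^ g i * f i =
      ∑ i ∈ s with Even (g i), f i - ∑ i ∈ s with Odd (g i), f i := by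
  rw [← sum_filter_add_sum_filter_not s (fun i => Even (g i))]
  simp only [Nat.not_even_iff_odd]
  rw [sub_eq_add_neg, ← sum_neg_distrib]
  congr 1 <;> refine sum_congr rfl fun i hi => ?_
  · rw [(mem_filter.mp hi).2.neg_one_pow, one_mul]
  · rw [(mem_filter.mp hi).2.neg_one_pow, neg_one_mul]

namespace Lagrange

theorem sum_nodalWeight_mul_pow_eq_zero {F ι : Type*} [Field F] [DecidableEq ι] {s : Finset ι}
    {v : ι → F} (hvs : Set.InjOn v s) {e : ℕ} (he : e + 1 < #s) :
    ∑ i ∈ s, nodalWeight s v i * v i ^ e = 0 := by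
  have hdeg : ((X : F[X]) ^ e).degree < #s := by
    rw [degree_X_pow]; exact_mod_cast he.trans' e.lt_succ_self
  have hcoeff := coeff_eq_sum hvs hdeg
  rw [coeff_X_pow, if_neg (by omega)] at hcoeff
  rw [hcoeff]
  refine sum_congr rfl fun i _ => ?_
  rw [eval_pow, eval_X, nodalWeight, prod_inv_distrib, div_eq_inv_mul]

theorem abs_nodalWeight_of_strictMono {K : Type*} [Field K] [LinearOrder K]
    [IsStrictOrderedRing K] {n : ℕ} {x : Fin n → K} (hx : StrictMono x) (i : Fin n) :
    |nodalWeight univ x i| = (-1) ^ (n - 1 - i) * nodalWeight univ x i := by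
  have hcard : #((univ.erase i).filter (i < ·)) = n - 1 - i := by
    rw [← Fin.card_Ioi]; congr 1; ext j
    simp only [mem_filter, mem_erase, mem_univ, mem_Ioi]
    exact ⟨And.right, fun h => ⟨⟨h.ne', trivial⟩, h⟩⟩
  have habs : ∀ j ∈ univ.erase i, |(x i - x j)⁻¹| = (if i < j then -1 else 1) * (x i - x j)⁻¹ := by
    intro j hj
    rcases lt_or_gt_of_ne (mem_erase.mp hj).1 with hji | hij
    · rw [if_neg (lt_asymm hji), one_mul, abs_of_pos (inv_pos.mpr (sub_pos.mpr (hx hji)))]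
    · rw [if_pos hij, abs_of_neg (inv_lt_zero.mpr (sub_neg.mpr (hx hij))), neg_one_mul]
  rw [nodalWeight, abs_prod, prod_congr rfl habs, prod_mul_distrib, prod_ite, prod_const,
    prod_const, one_pow, mul_one, hcard]

theorem sum_neg_one_pow_mul_abs_nodalWeight_mul_pow_eq_zero {K : Type*} [Field K]
    [LinearOrder K] [IsStrictOrderedRing K] {n : ℕ} {x : Fin n → K} (hx : StrictMono x) {e : ℕ}
    (he : e + 2 ≤ n) :
    ∑ i : Fin n, (-1) ^ (i : ℕ) * (|nodalWeight univ x i| * x i ^ e) = 0 := by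
  have hterm : ∀ i : Fin n, (-1) ^ (i : ℕ) * (|nodalWeight univ x i| * x i ^ e) =
      (-1) ^ (n - 1) * (nodalWeight univ x i * x i ^ e) := fun i => by
    rw [abs_nodalWeight_of_strictMono hx, ← mul_assoc, ← mul_assoc, ← pow_add,
      Nat.add_sub_cancel' (by omega : (i : ℕ) ≤ n - 1), mul_assoc]
  have hcard : e + 1 < #(univ : Finset (Fin n)) := by rw [card_univ, Fintype.card_fin]; omega
  rw [sum_congr rfl fun i _ => hterm i, ← mul_sum,
    sum_nodalWeight_mul_pow_eq_zero hx.injective.injOn hcard, mul_zero]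

end Lagrange

theorem stmt_18 (m : ℕ) (x : Fin (m + 2) → ℝ) (hx : StrictMono x) :
    ∃ α : Fin (m + 2) → ℝ, (∀ i, 0 < α i) ∧
      (∑ i ∈ Finset.univ.filter (fun i : Fin (m + 2) => Even (i : ℕ)), α i = 1) ∧
      (∑ i ∈ Finset.univ.filter (fun i : Fin (m + 2) => Odd (i : ℕ)), α i = 1) ∧
      ∀ e : ℕ, e ≤ m →
        ∑ i ∈ Finset.univ.filter (fun i : Fin (m + 2) => Even (i : ℕ)), α i * x i ^ e =
          ∑ i ∈ Finset.univ.filter (fun i : Fin (m + 2) => Odd (i : ℕ)), α i * x i ^ e := by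
  set β : Fin (m + 2) → ℝ := fun i => |Lagrange.nodalWeight univ x i|
  have hβ : ∀ i, 0 < β i := fun i =>
    abs_pos.mpr (Lagrange.nodalWeight_ne_zero hx.injective.injOn (mem_univ i))
  have hmoment : ∀ e ≤ m, ∑ i : Fin (m + 2) with Even i.val, β i * x i ^ e =
      ∑ i : Fin (m + 2) with Odd i.val, β i * x i ^ e := fun e he => sub_eq_zero.mp <| by
    rw [← sum_neg_one_pow_mul_eq_sub]
    exact Lagrange.sum_neg_one_pow_mul_abs_nodalWeight_mul_pow_eq_zero hx (by omega)
  set S := ∑ i : Fin (m + 2) with Even i.val, β i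
  have hS : 0 < S := sum_pos (fun i _ => hβ i) ⟨0, by simp⟩
  have hodd : ∑ i : Fin (m + 2) with Odd i.val, β i = S := by
    simpa using (hmoment 0 m.zero_le).symm
  refine ⟨fun i => β i / S, fun i => div_pos (hβ i) hS, ?_, ?_, fun e he => ?_⟩
  · rw [← sum_div, div_self hS.ne']
  · rw [← sum_div, hodd, div_self hS.ne']
  · simp only [div_mul_eq_mul_div, ← sum_div, hmoment e he]
end
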